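/- For every 0 < δ < 1/2 with H(δ) < 1/2 (H the binary entropy), there exists C > 0 such that for all sufficiently large n, there is a set S ⊆ {0,1}^n with |S| ≥ 2^{Cn}, such that every x ∈ S has relative Hamming weight in [1/3, 2/3], and for all distinct x, x' ∈ S the sets B^δ(x) ∪ B^δ(1-x) and B^δ(x') ∪ B^δ(1-x') are disjoint, where B^δ(y) is the set of strings at normalized Hamming distance at most δ from y. -/

import Mathlib

/-- The binary entropy function `H(p) = -p log₂ p - (1-p) log₂ (1-p)`. -/
noncomputable def binEntropy (p : ℝ) : ℝ :=
  -p * Real.logb 2 p - (1 - p) * Real.logb 2 (1 - p)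

/-- Normalized Hamming distance between two strings in `{0,1}^n`. -/
noncomputable def hamDist {n : ℕ} (x y : Fin n → Bool) : ℝ :=
  ((Finset.univ.filter fun i => x i ≠ y i).card : ℝ) / n

/-- Relative Hamming weight of a string in `{0,1}^n`. -/
noncomputable def relWeight {n : ℕ} (x : Fin n → Bool) : ℝ :=
  ((Finset.univ.filter fun i => x i = true).card : ℝ) / n

/-- Closed ball of normalized Hamming radius `δ` around `x`. -/
noncomputable def hamBall {n : ℕ} (δ : ℝ) (x : Fin n → Bool) : Set (Fin n → Bool) :=
  {y | hamDist x y ≤ δ}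

/-!
A Gilbert–Varshamov greedy argument on the words of weight `⌊n/2⌋`, where two words conflict
when one is within Hamming distance `2δn` of the other or of its complement. A word conflicts
with at most `2 · 2^{H(2δ)n}` words, and there are at least `2^n / (n + 1)` words of weight
`⌊n/2⌋`, so a maximal conflict-free family has at least `2^{(1 - H(2δ))n} / (2(n + 1))`
members.
Concavity of `H` and `H(0) = 0` give `H(2δ) ≤ 2 H(δ) < 1`, and `H(δ) < 1/2 < H(1/4)` gives
`2δ ≤ 1/2`, the range where the entropy bound on the volume of Hamming balls holds. Words at
distance more than `2δn` have disjoint `δ`-balls by the triangle inequality.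
-/

open Finset

lemma binEntropy_eq_div_log_two (p : ℝ) : binEntropy p = Real.binEntropy p / Real.log 2 := by
  unfold binEntropy Real.binEntropy Real.logb
  rw [Real.log_inv, Real.log_inv]
  ring

lemma binEntropy_two_mul_le {δ : ℝ} (h0 : 0 ≤ δ) (h1 : δ ≤ 1 / 2) :
    binEntropy (2 * δ) ≤ 2 * binEntropy δ := by
  have hconc := Real.strictConcave_binEntropy.concaveOn.2
    (show (0 : ℝ) ∈ Set.Icc 0 1 by norm_num)
    (show 2 * δ ∈ Set.Icc (0 : ℝ) 1 by constructor <;> linarith)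
    (by norm_num : (0 : ℝ) ≤ 1 / 2) (by norm_num : (0 : ℝ) ≤ 1 / 2) (by norm_num)
  simp only [smul_eq_mul, Real.binEntropy_zero, mul_zero, zero_add] at hconc
  rw [show 1 / 2 * (2 * δ) = δ by ring] at hconc
  rw [binEntropy_eq_div_log_two, binEntropy_eq_div_log_two]
  have := Real.log_pos (by norm_num : (1 : ℝ) < 2)
  rw [← mul_div_assoc, div_le_div_iff_of_pos_right this]
  linarith

lemma half_lt_binEntropy_one_quarter : 1 / 2 < binEntropy (1 / 4) := by
  have hlog2 := Real.log_pos (by norm_num : (1 : ℝ) < 2)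
  have h4 : Real.log 4 = 2 * Real.log 2 := by
    rw [show (4 : ℝ) = 2 ^ 2 by norm_num, Real.log_pow]; push_cast; ring
  have h43 : 0 < Real.log (4 / 3) := Real.log_pos (by norm_num)
  rw [binEntropy_eq_div_log_two, lt_div_iff₀ hlog2, Real.binEntropy]
  norm_num [h4]
  linarith

lemma le_one_quarter_of_binEntropy_le_half {δ : ℝ} (h1 : δ ≤ 1 / 2)
    (hH : binEntropy δ ≤ 1 / 2) : δ ≤ 1 / 4 := by
  by_contra! h
  have hmono := Real.binEntropy_strictMonoOn (show (1 : ℝ) / 4 ∈ Set.Icc 0 2⁻¹ by norm_num)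
    (show δ ∈ Set.Icc (0 : ℝ) 2⁻¹ by constructor <;> linarith) h
  have hlog2 := Real.log_pos (by norm_num : (1 : ℝ) < 2)
  have hquarter := half_lt_binEntropy_one_quarter
  rw [binEntropy_eq_div_log_two] at hH hquarter
  have := (div_lt_div_iff_of_pos_right hlog2).2 hmono
  linarith

theorem Finset.exists_pairwise_not_rel_card_le_mul {α : Type*} [DecidableEq α]
    {r : α → α → Prop} [DecidableRel r] (hsymm : ∀ x y, r x y → r y x)
    (hrefl : ∀ x, r x x)
    (A : Finset α) (K : ℕ) (hK : ∀ x ∈ A, #{y ∈ A | r x y} ≤ K) :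
    ∃ S ⊆ A, (S : Set α).Pairwise (fun x y => ¬ r x y) ∧ #A ≤ K * #S := by
  classical
  obtain ⟨S, hS, hmax⟩ := ({S ∈ A.powerset | (S : Set α).Pairwise fun x y => ¬ r x y} :
    Finset (Finset α)).exists_maximal ⟨∅, by simp⟩
  simp only [mem_filter, mem_powerset] at hS hmax
  obtain ⟨hSA, hSpw⟩ := hS
  refine ⟨S, hSA, hSpw, ?_⟩
  -- by maximality, the neighbourhoods of the points of `S` cover `A`
  have hcover : A ⊆ S.biUnion fun x => {y ∈ A | r x y} := by
    intro y hy
    by_contra hyS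
    simp only [mem_biUnion, mem_filter, not_exists, not_and, hy, true_and] at hyS
    have hy' : y ∉ S := fun h => hyS y h (hrefl y)
    have hins : ((insert y S : Finset α) : Set α).Pairwise (fun x y => ¬ r x y) := by
      rw [coe_insert, Set.pairwise_insert]
      exact ⟨hSpw, fun x hx _ => ⟨fun hr => hyS x hx (hsymm _ _ hr), hyS x hx⟩⟩
    exact hy' (hmax ⟨insert_subset hy hSA, hins⟩ (subset_insert y S) (mem_insert_self y S))
  calc #A ≤ #(S.biUnion fun x => {y ∈ A | r x y}) := card_le_card hcover
    _ ≤ ∑ x ∈ S, #{y ∈ A | r x y} := card_biUnion_le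
    _ ≤ ∑ _x ∈ S, K := sum_le_sum fun x hx => hK x (hSA hx)
    _ = K * #S := by rw [sum_const, smul_eq_mul, mul_comm]

lemma two_rpow_binEntropy_mul {p : ℝ} (hp0 : 0 < p) (hp1 : p < 1) (x : ℝ) :
    (2 : ℝ) ^ (binEntropy p * x) = (p ^ (p * x) * (1 - p) ^ ((1 - p) * x))⁻¹ := by
  have h2 : (0 : ℝ) ≤ 2 := by norm_num
  have hexp : binEntropy p * x =
      Real.logb 2 p * -(p * x) + Real.logb 2 (1 - p) * -((1 - p) * x) := by
    unfold binEntropy; ring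
  rw [hexp, Real.rpow_add (by norm_num), Real.rpow_mul h2, Real.rpow_mul h2,
    Real.rpow_logb (by norm_num) (by norm_num) hp0,
    Real.rpow_logb (by norm_num) (by norm_num) (sub_pos.2 hp1),
    Real.rpow_neg hp0.le, Real.rpow_neg (sub_pos.2 hp1).le, mul_inv]

lemma rpow_mul_rpow_le_pow_mul_pow {p : ℝ} (hp0 : 0 < p) (hp : p ≤ 1 / 2) {n k : ℕ}
    (hk : (k : ℝ) ≤ p * n) :
    p ^ (p * n) * (1 - p) ^ ((1 - p) * n) ≤ p ^ k * (1 - p) ^ (n - k) := by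
  have hq : 0 < 1 - p := by linarith
  have hkn : k ≤ n := by
    have : (k : ℝ) ≤ n := hk.trans (by nlinarith [(n.cast_nonneg : (0 : ℝ) ≤ n)])
    exact_mod_cast this
  -- both sides are `(1 - p) ^ n * (p / (1 - p)) ^ t`, decreasing in `t` as `p ≤ 1 - p`
  have hform : ∀ t : ℝ,
      p ^ t * (1 - p) ^ ((n : ℝ) - t) = (1 - p) ^ (n : ℝ) * (p / (1 - p)) ^ t := by
    intro t
    rw [Real.div_rpow hp0.le hq.le, Real.rpow_sub hq]
    field_simp
  have hratio : p / (1 - p) ≤ 1 := (div_le_one hq).2 (by linarith)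
  calc p ^ (p * n) * (1 - p) ^ ((1 - p) * n)
      = (1 - p) ^ (n : ℝ) * (p / (1 - p)) ^ (p * n) := by rw [← hform]; ring_nf
    _ ≤ (1 - p) ^ (n : ℝ) * (p / (1 - p)) ^ (k : ℝ) := by
      exact mul_le_mul_of_nonneg_left
        (Real.rpow_le_rpow_of_exponent_ge (by positivity) hratio hk) (by positivity)
    _ = p ^ k * (1 - p) ^ (n - k) := by
      rw [← hform, ← Real.rpow_natCast, ← Real.rpow_natCast, Nat.cast_sub hkn]

lemma sum_range_choose_le_two_rpow_binEntropy_mul {p : ℝ} (hp0 : 0 < p) (hp : p ≤ 1 / 2)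
    {n M : ℕ} (hM : (M : ℝ) ≤ p * n) :
    ∑ k ∈ range (M + 1), (n.choose k : ℝ) ≤ 2 ^ (binEntropy p * n) := by
  have hq : 0 < 1 - p := by linarith
  have hMn : M ≤ n := by
    have : (M : ℝ) ≤ n := hM.trans (by nlinarith [(n.cast_nonneg : (0 : ℝ) ≤ n)])
    exact_mod_cast this
  rw [two_rpow_binEntropy_mul hp0 (by linarith), inv_eq_one_div, le_div_iff₀ (by positivity),
    sum_mul]
  calc ∑ k ∈ range (M + 1), (n.choose k : ℝ) * (p ^ (p * n) * (1 - p) ^ ((1 - p) * n))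
      ≤ ∑ k ∈ range (M + 1), (n.choose k : ℝ) * (p ^ k * (1 - p) ^ (n - k)) := by
        refine sum_le_sum fun k hk => mul_le_mul_of_nonneg_left ?_ (by positivity)
        exact rpow_mul_rpow_le_pow_mul_pow hp0 hp
          (le_trans (by exact_mod_cast Nat.lt_succ_iff.1 (mem_range.1 hk)) hM)
    _ ≤ ∑ k ∈ range (n + 1), (n.choose k : ℝ) * (p ^ k * (1 - p) ^ (n - k)) :=
        sum_le_sum_of_subset_of_nonneg (range_subset_range.2 (by omega))
          fun k _ _ => by positivity
    _ = (p + (1 - p)) ^ n := by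
        rw [add_pow]
        exact sum_congr rfl fun k _ => by ring
    _ = 1 := by norm_num

section HammingBall

variable {ι : Type*} [Fintype ι]

lemma hammingDist_not_not (x y : ι → Bool) :
    hammingDist (fun i => !x i) (fun i => !y i) = hammingDist x y :=
  hammingDist_comp (fun _ => not) fun _ => Bool.not_injective

lemma hammingDist_not_left (x y : ι → Bool) :
    hammingDist (fun i => !x i) y = hammingDist x (fun i => !y i) := by
  conv_lhs => rw [← hammingDist_not_not]
  simp only [Bool.not_not]

variable [DecidableEq ι]

lemma card_hammingDist_le_le (x : ι → Bool) (M : ℕ) :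
    #{y | hammingDist x y ≤ M} ≤ ∑ k ∈ range (M + 1), (Fintype.card ι).choose k := by
  -- `y` is `x` with the coordinates of `{i | x i ≠ y i}` flipped
  have hcover : ({y | hammingDist x y ≤ M} : Finset (ι → Bool)) ⊆
      ((range (M + 1)).biUnion fun k => powersetCard k univ).image
        fun s i => xor (x i) (decide (i ∈ s)) := by
    intro y hy
    rw [mem_filter] at hy
    refine mem_image.2 ⟨({i | x i ≠ y i} : Finset ι), mem_biUnion.2 ⟨_,
      mem_range.2 (Nat.lt_succ_of_le hy.2), mem_powersetCard.2 ⟨subset_univ _, rfl⟩⟩,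
      funext fun i => ?_⟩
    cases hxi : x i <;> cases hyi : y i <;> simp [hxi, hyi]
  calc #{y | hammingDist x y ≤ M}
      ≤ #((range (M + 1)).biUnion fun k => powersetCard k (univ : Finset ι)) :=
        (card_le_card hcover).trans card_image_le
    _ ≤ ∑ k ∈ range (M + 1), #(powersetCard k (univ : Finset ι)) := card_biUnion_le
    _ = ∑ k ∈ range (M + 1), (Fintype.card ι).choose k := by
        simp only [card_powersetCard, card_univ]

lemma card_hammingDist_le_or_le (x : ι → Bool) (M : ℕ) :
    #{y | hammingDist x y ≤ M ∨ hammingDist x (fun i => !y i) ≤ M}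
      ≤ 2 * ∑ k ∈ range (M + 1), (Fintype.card ι).choose k := by
  have hflip : ({y | hammingDist x (fun i => !y i) ≤ M} : Finset (ι → Bool))
      ⊆ ({y | hammingDist x y ≤ M} : Finset (ι → Bool)).image fun y i => !y i := by
    intro y hy
    rw [mem_filter] at hy
    exact mem_image.2 ⟨fun i => !y i, mem_filter.2 ⟨mem_univ _, hy.2⟩, by simp⟩
  rw [filter_or, two_mul]
  exact (card_union_le _ _).trans (add_le_add (card_hammingDist_le_le x M)
    ((card_le_card hflip).trans (card_image_le.trans (card_hammingDist_le_le x M))))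

end HammingBall

section NormalizedDistance

variable {n : ℕ}

lemma hamDist_eq_hammingDist (x y : Fin n → Bool) : hamDist x y = hammingDist x y / n := rfl

lemma hamDist_comm (x y : Fin n → Bool) : hamDist x y = hamDist y x := by
  simp only [hamDist_eq_hammingDist, hammingDist_comm]

lemma hamDist_triangle (x y z : Fin n → Bool) : hamDist x z ≤ hamDist x y + hamDist y z := by
  simp only [hamDist_eq_hammingDist, ← add_div]
  gcongr
  exact_mod_cast hammingDist_triangle x y z

lemma disjoint_hamBall {δ : ℝ} {x y : Fin n → Bool} (h : 2 * δ < hamDist x y) :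
    Disjoint (hamBall δ x) (hamBall δ y) := by
  refine Set.disjoint_left.2 fun z hxz hyz => ?_
  change hamDist x z ≤ δ at hxz
  change hamDist y z ≤ δ at hyz
  have := hamDist_triangle x z y
  rw [hamDist_comm z y] at this
  linarith

lemma disjoint_hamBall_union_not {δ : ℝ} {x y : Fin n → Bool} (h : 2 * δ < hamDist x y)
    (h' : 2 * δ < hamDist x (fun i => !y i)) :
    Disjoint (hamBall δ x ∪ hamBall δ (fun i => !x i))
      (hamBall δ y ∪ hamBall δ (fun i => !y i)) := by
  have hnn : hamDist (fun i => !x i) (fun i => !y i) = hamDist x y := by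
    simp only [hamDist_eq_hammingDist, hammingDist_not_not]
  have hn : hamDist (fun i => !x i) y = hamDist x (fun i => !y i) := by
    simp only [hamDist_eq_hammingDist, hammingDist_not_left]
  simp only [Set.disjoint_union_left, Set.disjoint_union_right]
  exact ⟨⟨disjoint_hamBall h, disjoint_hamBall (by rwa [hn])⟩,
    ⟨disjoint_hamBall h', disjoint_hamBall (by rwa [hnn])⟩⟩

lemma lt_hamDist_of_floor_lt {c : ℝ} {x y : Fin n → Bool}
    (h : ⌊c * n⌋₊ < hammingDist x y) :
    c < hamDist x y := by
  have hn : 0 < n := by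
    have := h.trans_le (hammingDist_le_card_fintype (x := x) (y := y))
    simp only [Fintype.card_fin] at this
    omega
  rw [hamDist_eq_hammingDist, lt_div_iff₀ (by exact_mod_cast hn)]
  exact Nat.lt_of_floor_lt h

end NormalizedDistance

section HalfWeight

variable {n : ℕ}

def halfWeightWords (n : ℕ) : Finset (Fin n → Bool) :=
  (powersetCard (n / 2) univ).image fun s i => decide (i ∈ s)

lemma card_halfWeightWords : #(halfWeightWords n) = n.choose (n / 2) := by
  rw [halfWeightWords, card_image_of_injective _ fun s t h => ext fun i => by
    simpa using congrFun h i, card_powersetCard, card_univ, Fintype.card_fin]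

lemma relWeight_mem_of_mem_halfWeightWords (hn : 2 ≤ n) {x : Fin n → Bool}
    (hx : x ∈ halfWeightWords n) : 1 / 3 ≤ relWeight x ∧ relWeight x ≤ 2 / 3 := by
  obtain ⟨s, hs, rfl⟩ := mem_image.1 hx
  have hweight : relWeight (fun i => decide (i ∈ s)) = (n / 2 : ℕ) / n := by
    rw [relWeight, ← (mem_powersetCard.1 hs).2]
    simp
  have hnR : (0 : ℝ) < n := by exact_mod_cast (by omega : 0 < n)
  have h1 : (n : ℝ) ≤ 3 * (n / 2 : ℕ) := by exact_mod_cast (by omega : n ≤ 3 * (n / 2))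
  have h2 : 3 * ((n / 2 : ℕ) : ℝ) ≤ 2 * n := by
    exact_mod_cast (by omega : 3 * (n / 2) ≤ 2 * n)
  rw [hweight, le_div_iff₀ hnR, div_le_iff₀ hnR]
  constructor <;> linarith

lemma two_pow_le_succ_mul_choose_half (n : ℕ) : 2 ^ n ≤ (n + 1) * n.choose (n / 2) :=
  calc 2 ^ n = ∑ k ∈ range (n + 1), n.choose k := (Nat.sum_range_choose n).symm
    _ ≤ ∑ _k ∈ range (n + 1), n.choose (n / 2) :=
        sum_le_sum fun k _ => Nat.choose_le_middle k n
    _ = (n + 1) * n.choose (n / 2) := by rw [sum_const, card_range, smul_eq_mul]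

end HalfWeight

lemma exists_pm_separated_subset_halfWeightWords (n M : ℕ) :
    ∃ S ⊆ halfWeightWords n,
      (S : Set (Fin n → Bool)).Pairwise
        (fun x y => M < hammingDist x y ∧ M < hammingDist x (fun i => !y i)) ∧
      2 ^ n ≤ (n + 1) * (2 * ∑ k ∈ range (M + 1), n.choose k) * #S := by
  set r : (Fin n → Bool) → (Fin n → Bool) → Prop :=
    fun x y => hammingDist x y ≤ M ∨ hammingDist x (fun i => !y i) ≤ M
  have hsymm : ∀ x y, r x y → r y x := by
    rintro x y (h | h)
    · exact Or.inl (by rwa [hammingDist_comm])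
    · exact Or.inr (by rwa [← hammingDist_not_left, hammingDist_comm])
  have hrefl : ∀ x, r x x := fun x => Or.inl (by simp)
  obtain ⟨S, hSA, hSpw, hcard⟩ := (halfWeightWords n).exists_pairwise_not_rel_card_le_mul
    hsymm hrefl (2 * ∑ k ∈ range (M + 1), n.choose k) fun x _ =>
      (card_le_card (filter_subset_filter _ (subset_univ _))).trans
        (by simpa using card_hammingDist_le_or_le x M)
  refine ⟨S, hSA, fun x hx y hy hxy => by simpa [r] using hSpw hx hy hxy, ?_⟩
  calc 2 ^ n ≤ (n + 1) * #(halfWeightWords n) := by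
        rw [card_halfWeightWords]; exact two_pow_le_succ_mul_choose_half n
    _ ≤ (n + 1) * (2 * ∑ k ∈ range (M + 1), n.choose k) * #S := by
        rw [mul_assoc]; exact Nat.mul_le_mul_left _ hcard

lemma eventually_two_mul_add_one_le_two_rpow {c : ℝ} (hc : 0 < c) :
    ∀ᶠ n : ℕ in Filter.atTop, 2 * ((n : ℝ) + 1) ≤ 2 ^ (c * n) := by
  have hr : 1 < (2 : ℝ) ^ c := Real.one_lt_rpow (by norm_num) hc
  filter_upwards [(tendsto_pow_const_div_const_pow_of_one_lt 1 hr).eventually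
    (ge_mem_nhds (by norm_num : (0 : ℝ) < 1 / 4)), Filter.eventually_ge_atTop 1] with n hn h1
  rw [mul_comm, Real.rpow_mul (by norm_num), Real.rpow_natCast]
  rw [pow_one, div_le_iff₀ (by positivity)] at hn
  have : (1 : ℝ) ≤ n := by exact_mod_cast h1
  linarith

lemma two_rpow_le_of_two_pow_le_mul {a V c H : ℝ} {n N : ℕ} (h : 2 ^ n ≤ a * V * N)
    (ha : a ≤ 2 ^ (c * n)) (hV : V ≤ 2 ^ (H * n)) (hV0 : 0 ≤ V) :
    (2 : ℝ) ^ ((1 - H - c) * n) ≤ N := by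
  refine le_of_mul_le_mul_right ?_ (by positivity : 0 < (2 : ℝ) ^ (c * n) * 2 ^ (H * n))
  calc (2 : ℝ) ^ ((1 - H - c) * n) * (2 ^ (c * n) * 2 ^ (H * n)) = 2 ^ n := by
        rw [← Real.rpow_add two_pos, ← Real.rpow_add two_pos, ← Real.rpow_natCast]
        congr 1; ring
    _ ≤ a * V * N := h
    _ ≤ 2 ^ (c * n) * 2 ^ (H * n) * N := by gcongr
    _ = N * (2 ^ (c * n) * 2 ^ (H * n)) := by ring

theorem exists_large_pm_separated_code (δ : ℝ)
    (hδ0 : 0 < δ) (hδ1 : δ < 1 / 2) (hH : binEntropy δ < 1 / 2) :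
    ∃ C > (0 : ℝ), ∃ n₀ : ℕ, ∀ n ≥ n₀, ∃ 𝒮 : Finset (Fin n → Bool),
      (2 : ℝ) ^ (C * n) ≤ 𝒮.card ∧
      (∀ x ∈ 𝒮, 1 / 3 ≤ relWeight x ∧ relWeight x ≤ 2 / 3) ∧
      (∀ x ∈ 𝒮, ∀ x' ∈ 𝒮, x ≠ x' →
        Disjoint (hamBall δ x ∪ hamBall δ (fun i => !(x i)))
          (hamBall δ x' ∪ hamBall δ (fun i => !(x' i)))) := by
  have hδ4 : δ ≤ 1 / 4 := le_one_quarter_of_binEntropy_le_half hδ1.le hH.le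
  have hε : 0 < 1 - binEntropy (2 * δ) := by
    linarith [binEntropy_two_mul_le hδ0.le hδ1.le]
  set ε := 1 - binEntropy (2 * δ) with hεdef
  obtain ⟨n₀, hn₀⟩ :=
    Filter.eventually_atTop.1 (eventually_two_mul_add_one_le_two_rpow (half_pos hε))
  refine ⟨ε / 2, half_pos hε, max n₀ 2, fun n hn => ?_⟩
  set M := ⌊2 * δ * n⌋₊
  obtain ⟨S, hSA, hSsep, hScard⟩ := exists_pm_separated_subset_halfWeightWords n M
  refine ⟨S, ?_,
    fun x hx => relWeight_mem_of_mem_halfWeightWords (le_of_max_le_right hn) (hSA hx),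
    fun x hx x' hx' hne => disjoint_hamBall_union_not
      (lt_hamDist_of_floor_lt (hSsep hx hx' hne).1) (lt_hamDist_of_floor_lt (hSsep hx hx' hne).2)⟩
  have hV := sum_range_choose_le_two_rpow_binEntropy_mul (by linarith) (by linarith)
    (Nat.floor_le (by positivity : 0 ≤ 2 * δ * n))
  have hcard :
      (2 : ℝ) ^ n ≤ 2 * (n + 1) * (∑ k ∈ range (M + 1), (n.choose k : ℝ)) * #S := by
    have := (Nat.cast_le (α := ℝ)).2 hScard
    push_cast at this
    linarith
  convert two_rpow_le_of_two_pow_le_mul hcard (hn₀ n (le_of_max_le_left hn)) hV (by positivity)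
    using 3
  rw [hεdef]; ring
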